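/- arXiv:2207.03904 — 5 statements merged into one kernel-verified Lean document; each statement's English description precedes it below -/
import Mathlib

section
/- Let Σ_δ be an m×m real positive definite matrix, A an n×n real matrix, C an m×n real matrix, and {K_k}_{k≥1} a sequence of n×m real matrices. Define the sequence {Q^k} of n×n matrices by Q^0 = 0 and Q^k = (I − K_k C) A Q^{k-1} Aᵀ (I − K_k C)ᵀ + K_k Σ_δ K_kᵀ for k ≥ 1. Define the sequence {M_k} by M_0 = 0, M_1 = Q^1, and for k ≥ 2: M⁻_k = A M_{k-1} Aᵀ and M_k = M⁻_k − M⁻_k Cᵀ (C M⁻_k Cᵀ + Σ_δ)⁻¹ C M⁻_k. Then Q^k ⪰ M_k (in the Loewner order, i.e., Q^k − M_k is positive semidefinite) for every k ≥ 0. -/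
open Matrix

lemma psd_conj_t {p q : ℕ} {X : Matrix (Fin q) (Fin q) ℝ} (hX : X.PosSemidef)
    (B : Matrix (Fin p) (Fin q) ℝ) : (B * X * Bᵀ).PosSemidef := by
  have h := hX.mul_mul_conjTranspose_same B
  rwa [conjTranspose_eq_transpose_of_trivial] at h

lemma key_ineq_eq {n m : ℕ} (P : Matrix (Fin n) (Fin n) ℝ) (hP : P.PosSemidef)
    (Sδ : Matrix (Fin m) (Fin m) ℝ) (hSδ : Sδ.PosDef)
    (C : Matrix (Fin m) (Fin n) ℝ) (K : Matrix (Fin n) (Fin m) ℝ) :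
    ((1 - K * C) * P * (1 - K * C)ᵀ + K * Sδ * Kᵀ)
      - (P - P * Cᵀ * (C * P * Cᵀ + Sδ)⁻¹ * C * P)
    = (K - P * Cᵀ * (C * P * Cᵀ + Sδ)⁻¹) * (C * P * Cᵀ + Sδ)
        * (K - P * Cᵀ * (C * P * Cᵀ + Sδ)⁻¹)ᵀ := by
  have hPT : Pᵀ = P := by rw [← conjTranspose_eq_transpose_of_trivial]; exact hP.isHermitian
  have hSpd : (C * P * Cᵀ + Sδ).PosDef :=
    Matrix.PosDef.posSemidef_add (psd_conj_t hP C) hSδ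
  set S := C * P * Cᵀ + Sδ with hSdef
  have hST : Sᵀ = S := by rw [← conjTranspose_eq_transpose_of_trivial]; exact hSpd.isHermitian
  have hdet : IsUnit S.det := hSpd.det_pos.ne'.isUnit
  have hSi : S * S⁻¹ = 1 := mul_nonsing_inv _ hdet
  have hSi' : S⁻¹ * S = 1 := nonsing_inv_mul _ hdet
  have hSiT : (S⁻¹)ᵀ = S⁻¹ := by rw [transpose_nonsing_inv, hST]
  have e1 : (K - P * Cᵀ * S⁻¹) * S = K * S - P * Cᵀ := by
    rw [Matrix.sub_mul, Matrix.mul_assoc (P * Cᵀ), hSi', Matrix.mul_one]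
  have e2 : (K - P * Cᵀ * S⁻¹)ᵀ = Kᵀ - S⁻¹ * C * P := by
    simp [Matrix.transpose_sub, Matrix.transpose_mul, hSiT, hPT, Matrix.mul_assoc]
  rw [e1, e2]
  have e3 : K * S * S⁻¹ = K := by rw [Matrix.mul_assoc, hSi, Matrix.mul_one]
  simp only [Matrix.sub_mul, Matrix.mul_sub, ← Matrix.mul_assoc, e3,
    Matrix.transpose_sub, Matrix.transpose_mul, Matrix.transpose_one,
    Matrix.transpose_transpose, hPT, hSiT]
  simp only [hSdef, Matrix.mul_add, Matrix.add_mul, Matrix.one_mul, Matrix.mul_one,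
    ← Matrix.mul_assoc]
  abel

/-- Theorem 2: the Riccati-type sequence `M_k` is a Loewner lower bound for the
deviation covariance sequence `Q^k`. -/
theorem deviation_covariance_lower_bound
    {n m : ℕ}
    (Sδ : Matrix (Fin m) (Fin m) ℝ) (hSδ : Sδ.PosDef)
    (A : Matrix (Fin n) (Fin n) ℝ) (C : Matrix (Fin m) (Fin n) ℝ)
    (K : ℕ → Matrix (Fin n) (Fin m) ℝ)
    (Q M : ℕ → Matrix (Fin n) (Fin n) ℝ)
    (hQ0 : Q 0 = 0)
    (hQ : ∀ k, Q (k + 1)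
      = (1 - K (k + 1) * C) * A * Q k * Aᵀ * (1 - K (k + 1) * C)ᵀ
        + K (k + 1) * Sδ * (K (k + 1))ᵀ)
    (hM0 : M 0 = 0) (hM1 : M 1 = Q 1)
    (hM : ∀ k, 2 ≤ k →
      M k = A * M (k - 1) * Aᵀ
        - A * M (k - 1) * Aᵀ * Cᵀ * (C * (A * M (k - 1) * Aᵀ) * Cᵀ + Sδ)⁻¹
          * C * (A * M (k - 1) * Aᵀ)) :
    ∀ k : ℕ, (Q k - M k).PosSemidef := by
  have hQ1 : Q 1 = K 1 * Sδ * (K 1)ᵀ := by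
    have := hQ 0
    rw [hQ0] at this
    simpa using this
  have main : ∀ k, (M k).PosSemidef ∧ (Q k - M k).PosSemidef := by
    intro k
    induction k with
    | zero =>
      rw [hM0, hQ0]
      simpa using Matrix.PosSemidef.zero
    | succ j ih =>
      match j, ih with
      | 0, _ =>
        refine ⟨?_, ?_⟩
        · rw [hM1, hQ1]; exact psd_conj_t hSδ.posSemidef (K 1)
        · rw [hM1, sub_self]; exact Matrix.PosSemidef.zero
      | j + 1, ih =>
        obtain ⟨hMps, hQM⟩ := ih
        set P := A * M (j + 1) * Aᵀ with hPdef
        have hP : P.PosSemidef := psd_conj_t hMps A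
        have hMk : M (j + 2) = P - P * Cᵀ * (C * P * Cᵀ + Sδ)⁻¹ * C * P := by
          have h := hM (j + 2) (by omega)
          simpa using h
        set L := P * Cᵀ * (C * P * Cᵀ + Sδ)⁻¹ with hLdef
        have hS : (C * P * Cᵀ + Sδ).PosDef :=
          Matrix.PosDef.posSemidef_add (psd_conj_t hP C) hSδ
        constructor
        · -- M (j+2) is PSD
          have h0 := key_ineq_eq P hP Sδ hSδ C L
          rw [sub_self, Matrix.zero_mul, Matrix.zero_mul, sub_eq_zero] at h0
          rw [hMk, ← h0]
          exact ((psd_conj_t hP (1 - L * C)).add (psd_conj_t hSδ.posSemidef L))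
        · -- Q (j+2) - M (j+2) is PSD
          have hkK := key_ineq_eq P hP Sδ hSδ C (K (j + 2))
          have hfirst : Q (j + 2)
              - ((1 - K (j + 2) * C) * P * (1 - K (j + 2) * C)ᵀ
                  + K (j + 2) * Sδ * (K (j + 2))ᵀ)
              = ((1 - K (j + 2) * C) * A) * (Q (j + 1) - M (j + 1))
                  * ((1 - K (j + 2) * C) * A)ᵀ := by
            rw [hQ (j + 1), hPdef]
            simp only [Matrix.transpose_sub, Matrix.transpose_mul, Matrix.transpose_one,
              Matrix.mul_sub, Matrix.sub_mul, Matrix.mul_add, Matrix.add_mul,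
              Matrix.one_mul, Matrix.mul_one, ← Matrix.mul_assoc]
            abel
          have hsplit : Q (j + 2) - M (j + 2)
              = ((1 - K (j + 2) * C) * A) * (Q (j + 1) - M (j + 1))
                  * ((1 - K (j + 2) * C) * A)ᵀ
                + (K (j + 2) - L) * (C * P * Cᵀ + Sδ) * (K (j + 2) - L)ᵀ := by
            rw [hMk, ← hfirst, ← hkK]
            abel
          rw [hsplit]
          exact (psd_conj_t hQM _).add (psd_conj_t hS.posSemidef _)
  exact fun k => (main k).2
end

section
/- Let X be an n×n real positive semidefinite matrix, Σ an m×m real positive definite matrix, and C an m×n real matrix. For an n×m real matrix Γ define φ(X, Γ) = (I − Γ C) X (I − Γ C)ᵀ + Γ Σ Γᵀ, and set Γ* = X Cᵀ (C X Cᵀ + Σ)⁻¹. Then for every n×m real matrix Γ the identity φ(X, Γ) = φ(X, Γ*) + (Γ − Γ*)(C X Cᵀ + Σ)(Γ − Γ*)ᵀ holds; consequently φ(X, Γ) ⪰ φ(X, Γ*) for every Γ, i.e., Γ* minimizes φ(X, ·) in the Loewner order. -/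
open Matrix

/-- Completion-of-squares identity for the operator
`φ(X, Γ) = (I − Γ C) X (I − Γ C)ᵀ + Γ Sig Γᵀ`: with
`Γ* = X Cᵀ (C X Cᵀ + Sig)⁻¹` one has
`φ(X, Γ) = φ(X, Γ*) + (Γ − Γ*)(C X Cᵀ + Sig)(Γ − Γ*)ᵀ`, hence `Γ*` is the
Loewner-order minimizer of `φ(X, ·)`. -/
theorem phi_completion_of_squares_and_min
    {n m : ℕ}
    (X : Matrix (Fin n) (Fin n) ℝ) (hX : X.PosSemidef)
    (Sig : Matrix (Fin m) (Fin m) ℝ) (hSig : Sig.PosDef)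
    (C : Matrix (Fin m) (Fin n) ℝ)
    (φ : Matrix (Fin n) (Fin m) ℝ → Matrix (Fin n) (Fin n) ℝ)
    (hφ : ∀ Γ, φ Γ = (1 - Γ * C) * X * (1 - Γ * C)ᵀ + Γ * Sig * Γᵀ)
    (Γstar : Matrix (Fin n) (Fin m) ℝ)
    (hΓstar : Γstar = X * Cᵀ * (C * X * Cᵀ + Sig)⁻¹) :
    ∀ Γ : Matrix (Fin n) (Fin m) ℝ,
      φ Γ = φ Γstar + (Γ - Γstar) * (C * X * Cᵀ + Sig) * (Γ - Γstar)ᵀ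
      ∧ (φ Γ - φ Γstar).PosSemidef := by
  intro Γ
  set S := C * X * Cᵀ + Sig with hS
  clear_value S
  have hXt : Xᵀ = X := hX.isHermitian
  have hCXC : (C * X * Cᵀ).PosSemidef := by
    have := hX.mul_mul_conjTranspose_same C
    simpa [Matrix.mul_assoc] using this
  have hSd : S.PosDef := by rw [hS]; exact Matrix.PosDef.posSemidef_add hCXC hSig
  have hSt : Sᵀ = S := hSd.isHermitian
  have hinv : S⁻¹ * S = 1 := Matrix.nonsing_inv_mul S hSd.det_pos.ne'.isUnit
  have hA1 : Γstar * S = X * Cᵀ := by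
    rw [hΓstar, Matrix.mul_assoc, hinv, Matrix.mul_one]
  have hA2 : S * Γstarᵀ = C * X := by
    have h := congrArg Matrix.transpose hA1
    simpa [Matrix.transpose_mul, hSt, hXt] using h
  have hSig' : Sig = S - C * X * Cᵀ := by rw [hS]; abel
  -- expansion lemma
  have expand : ∀ G : Matrix (Fin n) (Fin m) ℝ,
      φ G = X - G * (C * X) - (X * Cᵀ) * Gᵀ + G * S * Gᵀ := by
    intro G
    rw [hφ, hSig']
    simp only [Matrix.transpose_sub, Matrix.transpose_mul, Matrix.transpose_one, hXt,
      Matrix.sub_mul, Matrix.mul_sub, Matrix.one_mul, Matrix.mul_one, Matrix.mul_assoc]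
    abel
  have hsq : (Γ - Γstar) * S * (Γ - Γstar)ᵀ
      = Γ * S * Γᵀ - Γ * (C * X) - (X * Cᵀ) * Γᵀ + Γstar * (C * X) := by
    have e1 : Γ * S * Γstarᵀ = Γ * (C * X) := by rw [Matrix.mul_assoc, hA2]
    have e2 : Γstar * S * Γᵀ = (X * Cᵀ) * Γᵀ := by rw [hA1]
    have e3 : Γstar * S * Γstarᵀ = Γstar * (C * X) := by rw [Matrix.mul_assoc, hA2]
    calc (Γ - Γstar) * S * (Γ - Γstar)ᵀ
        = Γ * S * Γᵀ - Γ * S * Γstarᵀ - Γstar * S * Γᵀ + Γstar * S * Γstarᵀ := by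
          simp only [Matrix.transpose_sub, Matrix.sub_mul, Matrix.mul_sub]
          abel
      _ = _ := by rw [e1, e2, e3]
  have estar : Γstar * S * Γstarᵀ = (X * Cᵀ) * Γstarᵀ := by rw [hA1]
  have estar2 : Γstar * S * Γstarᵀ = Γstar * (C * X) := by rw [Matrix.mul_assoc, hA2]
  have key : φ Γ = φ Γstar + (Γ - Γstar) * S * (Γ - Γstar)ᵀ := by
    rw [expand Γ, expand Γstar, hsq, estar]
    have : Γstar * (C * X) = (X * Cᵀ) * Γstarᵀ := by rw [← estar2, estar]
    rw [this]
    abel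
  refine ⟨key, ?_⟩
  have : φ Γ - φ Γstar = (Γ - Γstar) * S * (Γ - Γstar)ᵀ := by rw [key]; abel
  rw [this]
  have := hSd.posSemidef.mul_mul_conjTranspose_same (Γ - Γstar)
  simpa [Matrix.mul_assoc] using this
end

section
/- Let X be an n×n real positive semidefinite matrix, Σ an m×m real positive definite matrix, and C an m×n real matrix. For an n×m real matrix Γ define φ(X, Γ) = (I − Γ C) X (I − Γ C)ᵀ + Γ Σ Γᵀ, and set Γ* = X Cᵀ (C X Cᵀ + Σ)⁻¹. Then φ(X, Γ*) = X − X Cᵀ (C X Cᵀ + Σ)⁻¹ C X. -/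
/-!
`φ` is the Joseph form of the Kalman covariance update. With `S = C X Cᵀ + Σ`, expanding gives
`φ(Γ) = X - Γ C X - X Cᵀ Γᵀ + Γ S Γᵀ` for every `Γ`. At `Γ* = X Cᵀ S⁻¹`, symmetry of `X` and `S`
gives `X Cᵀ Γ*ᵀ = Γ* C X`, and `S⁻¹ S S⁻¹ = S⁻¹` gives `Γ* S Γ*ᵀ = Γ* C X`; two of the three
correction terms cancel.
-/

open Matrix

namespace Matrix

variable {ι κ R : Type*} [Fintype ι] [Fintype κ] [CommRing R]

lemma nonsing_inv_mul_self_mul_nonsing_inv [DecidableEq ι] (A : Matrix ι ι R) :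
    A⁻¹ * A * A⁻¹ = A⁻¹ := by
  by_cases h : IsUnit A.det
  · rw [nonsing_inv_mul A h, Matrix.one_mul]
  · simp [nonsing_inv_apply_not_isUnit A h]

lemma one_sub_mul_mul_one_sub_mul_transpose_add [DecidableEq ι] (X : Matrix ι ι R)
    (Sig : Matrix κ κ R) (C : Matrix κ ι R) (Γ : Matrix ι κ R) :
    (1 - Γ * C) * X * (1 - Γ * C)ᵀ + Γ * Sig * Γᵀ =
      X - Γ * C * X - X * Cᵀ * Γᵀ + Γ * (C * X * Cᵀ + Sig) * Γᵀ := by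
  simp only [transpose_sub, transpose_one, transpose_mul, Matrix.sub_mul, Matrix.mul_sub,
    Matrix.mul_add, Matrix.add_mul, Matrix.one_mul, Matrix.mul_one, Matrix.mul_assoc]
  abel

lemma joseph_form_at_kalman_gain [DecidableEq ι] [DecidableEq κ]
    {X : Matrix ι ι R} {Sig : Matrix κ κ R} (hX : X.IsSymm) (hSig : Sig.IsSymm)
    (C : Matrix κ ι R) {Γ : Matrix ι κ R} (hΓ : Γ = X * Cᵀ * (C * X * Cᵀ + Sig)⁻¹) :
    (1 - Γ * C) * X * (1 - Γ * C)ᵀ + Γ * Sig * Γᵀ =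
      X - X * Cᵀ * (C * X * Cᵀ + Sig)⁻¹ * C * X := by
  rw [one_sub_mul_mul_one_sub_mul_transpose_add]
  set S := C * X * Cᵀ + Sig
  have hS : S.IsSymm := IsSymm.add (by simp [IsSymm, hX.eq, Matrix.mul_assoc]) hSig
  have hΓt : Γᵀ = S⁻¹ * C * X := by
    rw [hΓ, transpose_mul, transpose_mul, hS.inv.eq, hX.eq, transpose_transpose, Matrix.mul_assoc]
  have hΓSΓt : Γ * S * Γᵀ = Γ * C * X := by
    calc Γ * S * Γᵀ = X * Cᵀ * (S⁻¹ * S * S⁻¹) * C * X := by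
          rw [hΓt, hΓ]; simp only [Matrix.mul_assoc]
      _ = Γ * C * X := by rw [nonsing_inv_mul_self_mul_nonsing_inv, hΓ]
  rw [hΓSΓt, hΓt, hΓ]
  simp only [Matrix.mul_assoc]
  abel

end Matrix

/-- The value of `φ(X, Γ) = (I − Γ C) X (I − Γ C)ᵀ + Γ Sig Γᵀ` at the optimal
gain `Γ* = X Cᵀ (C X Cᵀ + Sig)⁻¹` equals `X − X Cᵀ (C X Cᵀ + Sig)⁻¹ C X`. -/
theorem phi_at_optimal_gain
    {n m : ℕ}
    (X : Matrix (Fin n) (Fin n) ℝ) (hX : X.PosSemidef)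
    (Sig : Matrix (Fin m) (Fin m) ℝ) (hSig : Sig.PosDef)
    (C : Matrix (Fin m) (Fin n) ℝ)
    (φ : Matrix (Fin n) (Fin m) ℝ → Matrix (Fin n) (Fin n) ℝ)
    (hφ : ∀ Γ, φ Γ = (1 - Γ * C) * X * (1 - Γ * C)ᵀ + Γ * Sig * Γᵀ)
    (Γstar : Matrix (Fin n) (Fin m) ℝ)
    (hΓstar : Γstar = X * Cᵀ * (C * X * Cᵀ + Sig)⁻¹) :
    φ Γstar = X - X * Cᵀ * (C * X * Cᵀ + Sig)⁻¹ * C * X := by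
  rw [hφ]
  exact joseph_form_at_kalman_gain
    (isHermitian_iff_isSymm.mp hX.isHermitian) (isHermitian_iff_isSymm.mp hSig.isHermitian) C hΓstar
end

section
/- Let Σ_δ be an m×m real positive definite matrix, A an n×n real matrix, C an m×n real matrix, and K a fixed n×m real matrix. Define Q^0 = 0 and Q^k = (I − K C) A Q^{k-1} Aᵀ (I − K C)ᵀ + K Σ_δ Kᵀ for k ≥ 1, and define M_0 = 0, M_1 = Q^1, and for k ≥ 2: M⁻_k = A M_{k-1} Aᵀ, M_k = M⁻_k − M⁻_k Cᵀ (C M⁻_k Cᵀ + Σ_δ)⁻¹ C M⁻_k. Suppose that Q^k converges entrywise to a matrix Q∞ and M_k converges entrywise to a matrix M∞ as k → ∞. Then Q∞ ⪰ M∞; moreover Q∞ satisfies the Lyapunov fixed-point equation Q∞ = (I − K C) A Q∞ Aᵀ (I − K C)ᵀ + K Σ_δ Kᵀ, and M∞ together with M⁻∞ := A M∞ Aᵀ satisfies M∞ = M⁻∞ − M⁻∞ Cᵀ (C M⁻∞ Cᵀ + Σ_δ)⁻¹ C M⁻∞. -/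
/-! For symmetric `B` with `S = C B Cᵀ + R` invertible, completing the square gives
`(1 - K C) B (1 - K C)ᵀ + K R Kᵀ = (B - B Cᵀ S⁻¹ C B) + (K - G) S (K - G)ᵀ` with the Kalman gain
`G = B Cᵀ S⁻¹`. So the Riccati update is the Joseph update at `G`, hence positive semidefinite,
and lies below the Joseph update of every gain. The Joseph update is monotone in `B`, so induction
gives `M_k ⪯ Q^k` for `k ≥ 1`, and the bound passes to the limit because the positive
semidefinite cone is closed. Both fixed-point equations follow by passing to the limit in the
recursions; for the Riccati one, `C (A M∞ Aᵀ) Cᵀ + Σ_δ` is positive definite, so inversion is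
continuous there. -/

open Matrix Filter Topology Function

theorem isFixedPt_of_tendsto_of_eventually_succ {X : Type*} [TopologicalSpace X] [T2Space X]
    {u : ℕ → X} {f : X → X} {x : X} (hu : Tendsto u atTop (𝓝 x)) (hf : ContinuousAt f x)
    (hrec : ∀ᶠ k in atTop, u (k + 1) = f (u k)) : IsFixedPt f x :=
  tendsto_nhds_unique ((hf.tendsto.comp hu).congr' (hrec.mono fun _ h => h.symm))
    (hu.comp (tendsto_add_atTop_nat 1))

namespace Matrix

variable {ι κ : Type*}

theorem PosSemidef.isSymm {A : Matrix ι ι ℝ} (hA : A.PosSemidef) : A.IsSymm :=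
  (conjTranspose_eq_transpose_of_trivial A).symm.trans hA.isHermitian

variable [Fintype ι] [Fintype κ]

theorem PosSemidef.mul_mul_transpose_same {A : Matrix ι ι ℝ} (hA : A.PosSemidef)
    (B : Matrix κ ι ℝ) : (B * A * Bᵀ).PosSemidef := by
  simpa only [conjTranspose_eq_transpose_of_trivial] using hA.mul_mul_conjTranspose_same B

theorem PosSemidef.posDef_mul_mul_transpose_add {B : Matrix ι ι ℝ} (hB : B.PosSemidef)
    (C : Matrix κ ι ℝ) {R : Matrix κ κ ℝ} (hR : R.PosDef) : (C * B * Cᵀ + R).PosDef :=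
  PosDef.posSemidef_add (hB.mul_mul_transpose_same C) hR

theorem isClosed_setOf_posSemidef : IsClosed {A : Matrix ι ι ℝ | A.PosSemidef} := by
  simp only [posSemidef_iff_dotProduct_mulVec, Set.ofPred_and, Set.ofPred_forall]
  exact (isClosed_eq (by fun_prop) continuous_id).inter <| isClosed_iInter fun x =>
    isClosed_le continuous_const (continuous_const.dotProduct (continuous_id.matrix_mulVec
      continuous_const))

section Kalman

variable {𝕜 : Type*} [CommRing 𝕜] [DecidableEq ι]

def josephUpdate (K : Matrix ι κ 𝕜) (C : Matrix κ ι 𝕜) (R : Matrix κ κ 𝕜) (B : Matrix ι ι 𝕜) :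
    Matrix ι ι 𝕜 :=
  (1 - K * C) * B * (1 - K * C)ᵀ + K * R * Kᵀ

theorem josephUpdate_mul_mul_transpose (K : Matrix ι κ 𝕜) (C : Matrix κ ι 𝕜) (R : Matrix κ κ 𝕜)
    (A X : Matrix ι ι 𝕜) :
    josephUpdate K C R (A * X * Aᵀ) = (1 - K * C) * A * X * Aᵀ * (1 - K * C)ᵀ + K * R * Kᵀ := by
  simp only [josephUpdate, Matrix.mul_assoc]

theorem josephUpdate_sub_josephUpdate (K : Matrix ι κ 𝕜) (C : Matrix κ ι 𝕜) (R : Matrix κ κ 𝕜)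
    (B B' : Matrix ι ι 𝕜) :
    josephUpdate K C R B' - josephUpdate K C R B = (1 - K * C) * (B' - B) * (1 - K * C)ᵀ := by
  simp only [josephUpdate, Matrix.mul_sub, Matrix.sub_mul]
  abel

variable [DecidableEq κ]

noncomputable def riccatiUpdate (C : Matrix κ ι 𝕜) (R : Matrix κ κ 𝕜) (B : Matrix ι ι 𝕜) :
    Matrix ι ι 𝕜 :=
  B - B * Cᵀ * (C * B * Cᵀ + R)⁻¹ * C * B

noncomputable def kalmanGain (C : Matrix κ ι 𝕜) (R : Matrix κ κ 𝕜) (B : Matrix ι ι 𝕜) :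
    Matrix ι κ 𝕜 :=
  B * Cᵀ * (C * B * Cᵀ + R)⁻¹

theorem josephUpdate_eq_riccatiUpdate_add (K : Matrix ι κ 𝕜) {C : Matrix κ ι 𝕜}
    {R : Matrix κ κ 𝕜} {B : Matrix ι ι 𝕜} (hB : B.IsSymm) (hR : R.IsSymm)
    (hS : IsUnit (C * B * Cᵀ + R).det) :
    josephUpdate K C R B = riccatiUpdate C R B
      + (K - kalmanGain C R B) * (C * B * Cᵀ + R) * (K - kalmanGain C R B)ᵀ := by
  rw [josephUpdate, riccatiUpdate, kalmanGain]
  set S := C * B * Cᵀ + R with hS_def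
  set G := B * Cᵀ * S⁻¹
  have hSinv : S⁻¹ᵀ = S⁻¹ := by
    rw [transpose_nonsing_inv, hS_def]
    simp only [transpose_add, transpose_mul, transpose_transpose, hB.eq, hR.eq, Matrix.mul_assoc]
  have hGt : Gᵀ = S⁻¹ * C * B := by
    simp only [G, transpose_mul, transpose_transpose, hB.eq, hSinv, Matrix.mul_assoc]
  have hGS : G * S = B * Cᵀ := nonsing_inv_mul_cancel_right _ _ hS
  have hSGt : S * Gᵀ = C * B := by
    rw [hGt, Matrix.mul_assoc S⁻¹, mul_nonsing_inv_cancel_left _ _ hS]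
  calc (1 - K * C) * B * (1 - K * C)ᵀ + K * R * Kᵀ
      = B - K * (C * B) - B * Cᵀ * Kᵀ + K * S * Kᵀ := by
        simp only [hS_def, transpose_sub, transpose_one, transpose_mul, Matrix.sub_mul,
          Matrix.mul_sub, Matrix.mul_add, Matrix.add_mul, Matrix.one_mul, Matrix.mul_one,
          Matrix.mul_assoc]
        abel
    _ = B - B * Cᵀ * S⁻¹ * C * B + (K - G) * S * (K - G)ᵀ := by
        rw [transpose_sub, Matrix.mul_sub, Matrix.sub_mul, Matrix.sub_mul, Matrix.sub_mul, hGS,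
          Matrix.mul_assoc K S Gᵀ, hSGt, hGt]
        simp only [Matrix.mul_assoc]
        abel

end Kalman

section Real

variable {K : Matrix ι κ ℝ} {C : Matrix κ ι ℝ} {R : Matrix κ κ ℝ} {B B' : Matrix ι ι ℝ}

theorem continuousAt_riccatiUpdate [DecidableEq κ] (hS : IsUnit (C * B * Cᵀ + R).det) :
    ContinuousAt (riccatiUpdate C R) B := by
  have hinv : ContinuousAt (fun X : Matrix ι ι ℝ => (C * X * Cᵀ + R)⁻¹) B :=
    (continuousAt_matrix_inv _ (NormedRing.inverse_continuousAt hS.unit)).comp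
      (f := fun X : Matrix ι ι ℝ => C * X * Cᵀ + R) (by fun_prop)
  unfold riccatiUpdate
  fun_prop

variable [DecidableEq ι]

theorem continuous_josephUpdate : Continuous (josephUpdate K C R) := by
  unfold josephUpdate
  fun_prop

theorem posSemidef_josephUpdate (hB : B.PosSemidef) (hR : R.PosSemidef) :
    (josephUpdate K C R B).PosSemidef :=
  (hB.mul_mul_transpose_same _).add (hR.mul_mul_transpose_same K)

variable [DecidableEq κ]

theorem posSemidef_riccatiUpdate (hB : B.PosSemidef) (hR : R.PosDef) :
    (riccatiUpdate C R B).PosSemidef := by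
  have h := josephUpdate_eq_riccatiUpdate_add (kalmanGain C R B) hB.isSymm hR.posSemidef.isSymm
    (hB.posDef_mul_mul_transpose_add C hR).det_pos.ne'.isUnit
  rw [sub_self, Matrix.zero_mul, Matrix.zero_mul, add_zero] at h
  exact h ▸ posSemidef_josephUpdate hB hR.posSemidef

theorem posSemidef_josephUpdate_sub_riccatiUpdate (hB : B.PosSemidef)
    (hBB' : (B' - B).PosSemidef) (hR : R.PosDef) :
    (josephUpdate K C R B' - riccatiUpdate C R B).PosSemidef := by
  have hS := hB.posDef_mul_mul_transpose_add C hR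
  rw [← sub_add_sub_cancel _ (josephUpdate K C R B), josephUpdate_sub_josephUpdate,
    josephUpdate_eq_riccatiUpdate_add K hB.isSymm hR.posSemidef.isSymm hS.det_pos.ne'.isUnit,
    add_sub_cancel_left]
  exact (hBB'.mul_mul_transpose_same _).add (hS.posSemidef.mul_mul_transpose_same _)

theorem riccati_recursion_lower_bound {A : Matrix ι ι ℝ} (hR : R.PosDef) {Q M : ℕ → Matrix ι ι ℝ}
    (hQ1 : (Q 1).PosSemidef) (hM1 : M 1 = Q 1)
    (hQ : ∀ k, Q (k + 1) = josephUpdate K C R (A * Q k * Aᵀ))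
    (hM : ∀ k, 1 ≤ k → M (k + 1) = riccatiUpdate C R (A * M k * Aᵀ)) {k : ℕ} (hk : 1 ≤ k) :
    (M k).PosSemidef ∧ (Q k - M k).PosSemidef := by
  induction k, hk using Nat.le_induction with
  | base =>
    rw [hM1, sub_self]
    exact ⟨hQ1, .zero⟩
  | succ k hk ih =>
    have hAMA := ih.1.mul_mul_transpose_same A
    have hgap : (A * Q k * Aᵀ - A * M k * Aᵀ).PosSemidef := by
      rw [← Matrix.sub_mul, ← Matrix.mul_sub]
      exact ih.2.mul_mul_transpose_same A
    rw [hQ k, hM k hk]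
    exact ⟨posSemidef_riccatiUpdate hAMA hR,
      posSemidef_josephUpdate_sub_riccatiUpdate hAMA hgap hR⟩

end Real

end Matrix

theorem steady_state_deviation_lower_bound_general
    {n m : ℕ}
    (Sδ : Matrix (Fin m) (Fin m) ℝ) (hSδ : Sδ.PosDef)
    (A : Matrix (Fin n) (Fin n) ℝ) (C : Matrix (Fin m) (Fin n) ℝ)
    (K : Matrix (Fin n) (Fin m) ℝ)
    (Q M : ℕ → Matrix (Fin n) (Fin n) ℝ)
    (hQ0 : Q 0 = 0)
    (hQ : ∀ k, Q (k + 1)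
      = (1 - K * C) * A * Q k * Aᵀ * (1 - K * C)ᵀ + K * Sδ * Kᵀ)
    (hM1 : M 1 = Q 1)
    (hM : ∀ k, 2 ≤ k →
      M k = A * M (k - 1) * Aᵀ
        - A * M (k - 1) * Aᵀ * Cᵀ * (C * (A * M (k - 1) * Aᵀ) * Cᵀ + Sδ)⁻¹
          * C * (A * M (k - 1) * Aᵀ))
    (Qinf Minf : Matrix (Fin n) (Fin n) ℝ)
    (hQlim : Filter.Tendsto Q Filter.atTop (nhds Qinf))
    (hMlim : Filter.Tendsto M Filter.atTop (nhds Minf)) :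
    (Qinf - Minf).PosSemidef ∧
    Qinf = (1 - K * C) * A * Qinf * Aᵀ * (1 - K * C)ᵀ + K * Sδ * Kᵀ ∧
    Minf = A * Minf * Aᵀ
      - (A * Minf * Aᵀ) * Cᵀ * (C * (A * Minf * Aᵀ) * Cᵀ + Sδ)⁻¹
        * C * (A * Minf * Aᵀ) := by
  have hQ' (k : ℕ) : Q (k + 1) = josephUpdate K C Sδ (A * Q k * Aᵀ) := by
    rw [hQ, josephUpdate_mul_mul_transpose]
  have hM' (k : ℕ) (hk : 1 ≤ k) : M (k + 1) = riccatiUpdate C Sδ (A * M k * Aᵀ) :=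
    hM (k + 1) (by omega)
  have hQ1 : (Q 1).PosSemidef := by
    rw [hQ', hQ0]
    exact posSemidef_josephUpdate (PosSemidef.zero.mul_mul_transpose_same A) hSδ.posSemidef
  have bound : ∀ᶠ k in atTop, (M k).PosSemidef ∧ (Q k - M k).PosSemidef :=
    eventually_atTop.2 ⟨1, fun _ => riccati_recursion_lower_bound hSδ hQ1 hM1 hQ' hM'⟩
  have hMinf : Minf.PosSemidef :=
    isClosed_setOf_posSemidef.mem_of_tendsto hMlim (bound.mono fun _ => And.left)
  have hconj : Continuous fun X : Matrix (Fin n) (Fin n) ℝ => A * X * Aᵀ := by fun_prop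
  refine ⟨isClosed_setOf_posSemidef.mem_of_tendsto (hQlim.sub hMlim)
    (bound.mono fun _ => And.right), ?_, ?_⟩
  · rw [← josephUpdate_mul_mul_transpose]
    exact (isFixedPt_of_tendsto_of_eventually_succ hQlim
      (continuous_josephUpdate.comp hconj).continuousAt (.of_forall hQ')).symm
  · have hS := (hMinf.mul_mul_transpose_same A).posDef_mul_mul_transpose_add C hSδ
    have hcont : ContinuousAt (fun X => riccatiUpdate C Sδ (A * X * Aᵀ)) Minf :=
      (continuousAt_riccatiUpdate hS.det_pos.ne'.isUnit).comp' (x := Minf) hconj.continuousAt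
    exact (isFixedPt_of_tendsto_of_eventually_succ hMlim hcont
      (eventually_atTop.2 ⟨1, hM'⟩)).symm

/-- Infinite-horizon lower bound: if the deviation covariance recursion `Q^k`
(with constant gain `K`) converges to `Q∞` and the Riccati-type lower-bound
recursion `M_k` converges to `M∞`, then `Q∞ ⪰ M∞`, `Q∞` satisfies the Lyapunov
fixed-point equation, and `M∞` satisfies the Riccati fixed-point equation. -/
theorem steady_state_deviation_lower_bound
    {n m : ℕ}
    (Sδ : Matrix (Fin m) (Fin m) ℝ) (hSδ : Sδ.PosDef)
    (A : Matrix (Fin n) (Fin n) ℝ) (C : Matrix (Fin m) (Fin n) ℝ)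
    (K : Matrix (Fin n) (Fin m) ℝ)
    (Q M : ℕ → Matrix (Fin n) (Fin n) ℝ)
    (hQ0 : Q 0 = 0)
    (hQ : ∀ k, Q (k + 1)
      = (1 - K * C) * A * Q k * Aᵀ * (1 - K * C)ᵀ + K * Sδ * Kᵀ)
    (hM0 : M 0 = 0) (hM1 : M 1 = Q 1)
    (hM : ∀ k, 2 ≤ k →
      M k = A * M (k - 1) * Aᵀ
        - A * M (k - 1) * Aᵀ * Cᵀ * (C * (A * M (k - 1) * Aᵀ) * Cᵀ + Sδ)⁻¹
          * C * (A * M (k - 1) * Aᵀ))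
    (Qinf Minf : Matrix (Fin n) (Fin n) ℝ)
    (hQlim : Filter.Tendsto Q Filter.atTop (nhds Qinf))
    (hMlim : Filter.Tendsto M Filter.atTop (nhds Minf)) :
    (Qinf - Minf).PosSemidef ∧
    Qinf = (1 - K * C) * A * Qinf * Aᵀ * (1 - K * C)ᵀ + K * Sδ * Kᵀ ∧
    Minf = A * Minf * Aᵀ
      - (A * Minf * Aᵀ) * Cᵀ * (C * (A * Minf * Aᵀ) * Cᵀ + Sδ)⁻¹
        * C * (A * Minf * Aᵀ) :=
  steady_state_deviation_lower_bound_general Sδ hSδ A C K Q M hQ0 hQ hM1 hM Qinf Minf hQlim hMlim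
end

section
/- Let A be an n×n real matrix, B an n×p real matrix, C an m×n real matrix, {K_k}_{k≥1} a sequence of n×m real matrices, {S_k}_{k≥1} a sequence of n×n real symmetric positive semidefinite matrices, U a p×p real symmetric positive definite matrix, and set L_k = −(Bᵀ S_{k+1} B + U)⁻¹ Bᵀ S_{k+1} A. Let {y_k}_{k≥1} ⊂ ℝ^m be an arbitrary measurement sequence and {δ_k}_{k≥1} ⊂ ℝ^m a sequence satisfying K_k δ_k ≠ 0 and A K_k δ_k = 0 for every k ≥ 1. Define three recursions, all from the common initial condition x̂*_{0|0} = x̂_{0|0} = x̂^pub_{0|0} = x̄₀ ∈ ℝ^n: (nominal) u*_k = L_k x̂*_{k|k}, x̂*_{k|k-1} = A x̂*_{k-1|k-1} + B u*_{k-1}, x̂*_{k|k} = x̂*_{k|k-1} + K_k (y_k − C x̂*_{k|k-1}); (privacy system) u_k = L_k x̂^pub_{k|k}, x̂^pub_{k|k-1} = A x̂^pub_{k-1|k-1} + B u_{k-1}, x̂^pub_{k|k} = x̂^pub_{k|k-1} + K_k (y_k + δ_k − C x̂^pub_{k|k-1}), and x̂_{k|k-1} = A x̂_{k-1|k-1}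 + B u_{k-1}, x̂_{k|k} = x̂_{k|k-1} + K_k (y_k − C x̂_{k|k-1}). Then for every k ≥ 0: u_k = u*_k and x̂_{k|k} = x̂*_{k|k}, while for every k ≥ 1: x̂^pub_{k|k} ≠ x̂_{k|k}. That is, the server's public estimate is deviated from the true estimate at every time step, yet the control inputs and the true estimates coincide with those of the optimal (noise-free) system. -/
open Matrix

/-- Imperfect-state-information perfect-privacy result: if the injected noise
satisfies `K_k δ_k ≠ 0` and `A K_k δ_k = 0` for all `k ≥ 1`, then the control
inputs and the true estimates of the privacy system coincide with those of the
optimal (noise-free) system, while the public estimate is deviated from the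
true estimate at every time `k ≥ 1`. -/
theorem perfect_privacy_imperfect_information
    {n m p : ℕ}
    (A : Matrix (Fin n) (Fin n) ℝ) (B : Matrix (Fin n) (Fin p) ℝ)
    (C : Matrix (Fin m) (Fin n) ℝ)
    (K : ℕ → Matrix (Fin n) (Fin m) ℝ)
    (S : ℕ → Matrix (Fin n) (Fin n) ℝ)
    (hS : ∀ k, (S k).PosSemidef)
    (U : Matrix (Fin p) (Fin p) ℝ) (hU : U.PosDef)
    (L : ℕ → Matrix (Fin p) (Fin n) ℝ)
    (hL : ∀ k, L k = -((Bᵀ * S (k + 1) * B + U)⁻¹ * Bᵀ * S (k + 1) * A))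
    (y δ : ℕ → Fin m → ℝ)
    (hδ : ∀ k, 1 ≤ k → K k *ᵥ δ k ≠ 0 ∧ A *ᵥ (K k *ᵥ δ k) = 0)
    (xbar0 : Fin n → ℝ)
    (xstar xstarPred xhat xhatPred xpub xpubPred : ℕ → Fin n → ℝ)
    (ustar u : ℕ → Fin p → ℝ)
    -- common initial condition
    (hx0star : xstar 0 = xbar0) (hx0 : xhat 0 = xbar0) (hx0pub : xpub 0 = xbar0)
    -- nominal (noise-free, optimal) system
    (hustar : ∀ k, ustar k = L k *ᵥ xstar k)
    (hstarPred : ∀ k, xstarPred (k + 1) = A *ᵥ xstar k + B *ᵥ ustar k)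
    (hstar : ∀ k, xstar (k + 1)
      = xstarPred (k + 1) + K (k + 1) *ᵥ (y (k + 1) - C *ᵥ xstarPred (k + 1)))
    -- privacy system: public estimate driven by z = y + δ, control from it
    (hu : ∀ k, u k = L k *ᵥ xpub k)
    (hpubPred : ∀ k, xpubPred (k + 1) = A *ᵥ xpub k + B *ᵥ u k)
    (hpub : ∀ k, xpub (k + 1)
      = xpubPred (k + 1)
        + K (k + 1) *ᵥ (y (k + 1) + δ (k + 1) - C *ᵥ xpubPred (k + 1)))
    -- true estimate in the privacy system, driven by y and the input u
    (hhatPred : ∀ k, xhatPred (k + 1) = A *ᵥ xhat k + B *ᵥ u k)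
    (hhat : ∀ k, xhat (k + 1)
      = xhatPred (k + 1) + K (k + 1) *ᵥ (y (k + 1) - C *ᵥ xhatPred (k + 1))) :
    (∀ k : ℕ, u k = ustar k ∧ xhat k = xstar k) ∧
    (∀ k : ℕ, 1 ≤ k → xpub k ≠ xhat k) := by
  -- `L k` annihilates vectors in the kernel of `A`
  have hLker : ∀ k (v : Fin n → ℝ), A *ᵥ v = 0 → L k *ᵥ v = 0 := by
    intro k v hv
    rw [hL, neg_mulVec, ← Matrix.mulVec_mulVec, hv, Matrix.mulVec_zero, neg_zero]
  -- main induction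
  have key : ∀ k : ℕ, u k = ustar k ∧ xhat k = xstar k ∧
      xpub k = xhat k + (if k = 0 then 0 else K k *ᵥ δ k) := by
    intro k
    induction k with
    | zero =>
      refine ⟨?_, by rw [hx0, hx0star], by simp [hx0, hx0pub]⟩
      rw [hu, hustar, hx0pub, hx0star]
    | succ k ih =>
      obtain ⟨ihu, ih1, ih2⟩ := ih
      have hAe : A *ᵥ (xpub k - xhat k) = 0 := by
        rw [ih2, add_sub_cancel_left]
        cases k with
        | zero => simp
        | succ j => exact (hδ (j + 1) (Nat.le_add_left 1 j)).2
      have hPredEq : xpubPred (k + 1) = xhatPred (k + 1) := by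
        rw [hpubPred, hhatPred]
        have : A *ᵥ xpub k = A *ᵥ xhat k + A *ᵥ (xpub k - xhat k) := by
          rw [← Matrix.mulVec_add]; congr 1; ring
        rw [this, hAe, add_zero]
      have hhatS : xhat (k + 1) = xstar (k + 1) := by
        rw [hhat, hstar, hhatPred, hstarPred, ih1, ihu]
      have hpubS : xpub (k + 1) = xhat (k + 1) + K (k + 1) *ᵥ δ (k + 1) := by
        rw [hpub, hPredEq, hhat]
        have : y (k + 1) + δ (k + 1) - C *ᵥ xhatPred (k + 1)
            = (y (k + 1) - C *ᵥ xhatPred (k + 1)) + δ (k + 1) := by abel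
        rw [this, Matrix.mulVec_add]
        abel
      refine ⟨?_, hhatS, by simpa using hpubS⟩
      have hL0 : L (k + 1) *ᵥ (K (k + 1) *ᵥ δ (k + 1)) = 0 :=
        hLker (k + 1) _ (hδ (k + 1) (Nat.le_add_left 1 k)).2
      rw [hu, hustar, hpubS, hhatS, Matrix.mulVec_add, hL0, add_zero]
  refine ⟨fun k => ⟨(key k).1, (key k).2.1⟩, fun k hk h => ?_⟩
  have h2 := (key k).2.2
  rw [if_neg (by omega : ¬ k = 0), h] at h2
  exact (hδ k hk).1 (left_eq_add.mp h2)
end
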